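/- arXiv:1706.08776 — 7 statements merged into one kernel-verified Lean document; each statement's English description precedes it below -/
import Mathlib

section
/- The probability measures P^{1,N} on ℝ² with densities φ^{1,N} converge weakly to the uniform distribution μ_∞ on the closed unit disc as N → ∞: for every bounded continuous function f : ℝ² → ℝ, ∫_{ℝ²} f(z) φ^{1,N}(z) dz → (1/π) ∫_{|z|≤1} f(z) dz as N → ∞. -/
/-!
Write `χ_N(s) = e^{-Ns} e_N(Ns)`, so that `φ^{1,N}(z) = π⁻¹ χ_N(|z|²)`. Comparing the exponential
series at `Ns` termwise with the one at `N` gives `1 - χ_N(s) ≤ (s e^{1-s})^N` for `s ≤ 1` and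
`χ_N(s) ≤ (s e^{1-s})^N` for `s ≥ 1`, and `s e^{1-s} < 1` unless `s = 1`. Hence `φ^{1,N}` tends to
`π⁻¹ 𝟙_{|z| ≤ 1}` off the unit circle, under the integrable bound `2 e^{(1-|z|²)/2}`, and dominated
convergence concludes.
-/

open MeasureTheory Real Filter

/-- Truncated exponential series `e_N(t) = ∑_{ℓ=0}^{N-1} tˡ/ℓ!`. -/
noncomputable def eN (N : ℕ) (t : ℝ) : ℝ := ∑ ℓ ∈ Finset.range N, t ^ ℓ / (Nat.factorial ℓ)

/-- One-particle marginal density `φ^{1,N}(z) = π⁻¹ e^{-N|z|²} e_N(N|z|²)` on `ℝ²`. -/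
noncomputable def phi1 (N : ℕ) (z : EuclideanSpace ℝ (Fin 2)) : ℝ :=
  (Real.pi)⁻¹ * Real.exp (-(N : ℝ) * ‖z‖ ^ 2) * eN N ((N : ℝ) * ‖z‖ ^ 2)

open Topology

lemma eN_nonneg {N : ℕ} {t : ℝ} (ht : 0 ≤ t) : 0 ≤ eN N t :=
  Finset.sum_nonneg fun _ _ => by positivity

lemma eN_le_exp {N : ℕ} {t : ℝ} (ht : 0 ≤ t) : eN N t ≤ exp t :=
  sum_le_exp_of_nonneg ht N

lemma exp_sub_eN_eq_tsum (N : ℕ) (t : ℝ) :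
    exp t - eN N t = ∑' k : ℕ, t ^ (k + N) / (k + N).factorial := by
  have hexp : HasSum (fun n : ℕ => t ^ n / n.factorial) (exp t) := by
    rw [exp_eq_exp_ℝ]; exact NormedSpace.expSeries_div_hasSum_exp t
  rw [← hexp.tsum_eq, ← hexp.summable.sum_add_tsum_nat_add N, eN, add_sub_cancel_left]

lemma eN_mul_le_pow_mul_eN (N : ℕ) {s t : ℝ} (hs : 1 ≤ s) (ht : 0 ≤ t) :
    eN N (s * t) ≤ s ^ N * eN N t := by
  rw [eN, eN, Finset.mul_sum]
  gcongr with ℓ hℓ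
  rw [mul_pow, mul_div_assoc]
  gcongr
  exact (Finset.mem_range.mp hℓ).le

lemma exp_mul_sub_eN_le_pow_mul (N : ℕ) {s t : ℝ} (hs₀ : 0 ≤ s) (hs₁ : s ≤ 1) (ht : 0 ≤ t) :
    exp (s * t) - eN N (s * t) ≤ s ^ N * (exp t - eN N t) := by
  have hsum : Summable (fun k : ℕ => t ^ (k + N) / (k + N).factorial) :=
    (summable_nat_add_iff N).mpr (summable_pow_div_factorial t)
  rw [exp_sub_eN_eq_tsum, exp_sub_eN_eq_tsum, ← tsum_mul_left]
  refine Summable.tsum_le_tsum (fun k => ?_) ((summable_nat_add_iff N).mpr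
    (summable_pow_div_factorial (s * t))) (hsum.mul_left _)
  rw [mul_pow, mul_div_assoc]
  exact mul_le_mul_of_nonneg_right (pow_le_pow_of_le_one hs₀ hs₁ (Nat.le_add_left N k))
    (by positivity)

lemma mul_exp_one_sub_lt_one {s : ℝ} (hs : s ≠ 1) : s * exp (1 - s) < 1 := by
  have hlt : s < exp (s - 1) := by linarith [add_one_lt_exp (sub_ne_zero.mpr hs)]
  calc s * exp (1 - s) < exp (s - 1) * exp (1 - s) := by gcongr
    _ = 1 := by rw [← exp_add]; simp

lemma mul_exp_one_sub_pow (N : ℕ) (s : ℝ) :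
    (s * exp (1 - s)) ^ N = exp (-(N : ℝ) * s) * (s ^ N * exp N) := by
  rw [mul_pow, ← exp_nat_mul, show (N : ℝ) * (1 - s) = -N * s + N by ring, exp_add]
  ring

/-- `P(X < N)` for `X` Poisson of mean `N s`. -/
noncomputable def radialProfile (N : ℕ) (s : ℝ) : ℝ := exp (-(N : ℝ) * s) * eN N ((N : ℝ) * s)

section radialProfile

variable (N : ℕ) {s : ℝ}

lemma radialProfile_nonneg (hs : 0 ≤ s) : 0 ≤ radialProfile N s :=
  mul_nonneg (exp_pos _).le (eN_nonneg (by positivity))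

lemma radialProfile_le_one (hs : 0 ≤ s) : radialProfile N s ≤ 1 := by
  calc radialProfile N s ≤ exp (-(N : ℝ) * s) * exp ((N : ℝ) * s) :=
        mul_le_mul_of_nonneg_left (eN_le_exp (by positivity)) (exp_pos _).le
    _ = 1 := by rw [← exp_add]; simp

lemma one_sub_radialProfile_le (hs₀ : 0 ≤ s) (hs₁ : s ≤ 1) :
    1 - radialProfile N s ≤ (s * exp (1 - s)) ^ N := by
  have htail := exp_mul_sub_eN_le_pow_mul N hs₀ hs₁ N.cast_nonneg
  rw [mul_comm s] at htail
  have hhead := eN_nonneg (N := N) N.cast_nonneg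
  rw [mul_exp_one_sub_pow, radialProfile]
  calc 1 - exp (-(N : ℝ) * s) * eN N (N * s)
      = exp (-(N : ℝ) * s) * (exp (N * s) - eN N (N * s)) := by
        rw [mul_sub, ← exp_add]; simp
    _ ≤ exp (-(N : ℝ) * s) * (s ^ N * exp N) := by
        gcongr
        nlinarith [pow_nonneg hs₀ N]

lemma radialProfile_le_pow (hs : 1 ≤ s) : radialProfile N s ≤ (s * exp (1 - s)) ^ N := by
  rw [mul_exp_one_sub_pow, radialProfile]
  gcongr
  calc eN N (N * s) ≤ s ^ N * eN N N := by
        rw [mul_comm]; exact eN_mul_le_pow_mul_eN N hs N.cast_nonneg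
    _ ≤ s ^ N * exp N := by gcongr; exact eN_le_exp N.cast_nonneg

variable {N}

lemma tendsto_radialProfile_of_lt_one (hs₀ : 0 ≤ s) (hs₁ : s < 1) :
    Tendsto (radialProfile · s) atTop (𝓝 1) := by
  have hr := tendsto_pow_atTop_nhds_zero_of_lt_one (by positivity)
    (mul_exp_one_sub_lt_one hs₁.ne)
  refine tendsto_of_tendsto_of_tendsto_of_le_of_le (by simpa using hr.const_sub 1)
    tendsto_const_nhds (fun N => ?_) (fun N => radialProfile_le_one N hs₀)
  linarith [one_sub_radialProfile_le N hs₀ hs₁.le]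

lemma tendsto_radialProfile_of_one_lt (hs : 1 < s) :
    Tendsto (radialProfile · s) atTop (𝓝 0) :=
  tendsto_of_tendsto_of_tendsto_of_le_of_le tendsto_const_nhds
    (tendsto_pow_atTop_nhds_zero_of_lt_one (by positivity) (mul_exp_one_sub_lt_one hs.ne'))
    (fun N => radialProfile_nonneg N (by positivity)) (fun N => radialProfile_le_pow N hs.le)

lemma radialProfile_le_two_mul_exp (hs : 0 ≤ s) : radialProfile N s ≤ 2 * exp ((1 - s) / 2) := by
  rcases le_or_gt s 1 with hs₁ | hs₁
  · have : 1 ≤ exp ((1 - s) / 2) := one_le_exp (by linarith)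
    linarith [radialProfile_le_one N hs]
  have hr₀ : 0 ≤ s * exp (1 - s) := by positivity
  have hr₁ : s * exp (1 - s) ≤ 2 * exp ((1 - s) / 2) := by
    -- `s ≤ 2 e^{(s-1)/2}` is `2u + 1 ≤ 2 e^u` for `u = (s-1)/2`
    have hs : s ≤ 2 * exp ((s - 1) / 2) := by linarith [add_one_le_exp ((s - 1) / 2)]
    calc s * exp (1 - s) ≤ 2 * exp ((s - 1) / 2) * exp (1 - s) := by gcongr
      _ = 2 * exp ((1 - s) / 2) := by rw [mul_assoc, ← exp_add]; ring_nf
  rcases N with _ | N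
  · simp [radialProfile, eN]; positivity
  calc radialProfile (N + 1) s ≤ (s * exp (1 - s)) ^ (N + 1) := radialProfile_le_pow _ hs₁.le
    _ ≤ s * exp (1 - s) :=
        pow_le_of_le_one hr₀ (mul_exp_one_sub_lt_one hs₁.ne').le (Nat.succ_ne_zero N)
    _ ≤ 2 * exp ((1 - s) / 2) := hr₁

end radialProfile

lemma integrable_exp_neg_mul_sq_norm {V : Type*} [NormedAddCommGroup V] [InnerProductSpace ℝ V]
    [FiniteDimensional ℝ V] [MeasurableSpace V] [BorelSpace V] {b : ℝ} (hb : 0 < b) :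
    Integrable (fun v : V => exp (-b * ‖v‖ ^ 2)) := by
  refine (GaussianFourier.integrable_cexp_neg_mul_sq_norm_add (V := V) (b := b)
    (by simpa using hb) 0 0).norm.congr (ae_of_all _ fun v => ?_)
  simp [Complex.norm_exp, ← Complex.ofReal_pow]

lemma tendsto_integral_mul_of_dominated {α : Type*} [MeasurableSpace α] {μ : Measure α}
    {f g ρ : α → ℝ} {ρs : ℕ → α → ℝ} {M : ℝ} (hf : AEStronglyMeasurable f μ)
    (hM : ∀ x, |f x| ≤ M) (hρs : ∀ N, AEStronglyMeasurable (ρs N) μ) (hg : Integrable g μ)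
    (hρg : ∀ N, ∀ᵐ x ∂μ, |ρs N x| ≤ g x)
    (hlim : ∀ᵐ x ∂μ, Tendsto (ρs · x) atTop (𝓝 (ρ x))) :
    Tendsto (fun N => ∫ x, f x * ρs N x ∂μ) atTop (𝓝 (∫ x, f x * ρ x ∂μ)) := by
  refine tendsto_integral_of_dominated_convergence (fun x => M * g x)
    (fun N => hf.mul (hρs N)) (hg.const_mul M) (fun N => ?_)
    (hlim.mono fun x hx => hx.const_mul (f x))
  filter_upwards [hρg N] with x hx
  rw [norm_mul, Real.norm_eq_abs, Real.norm_eq_abs]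
  exact mul_le_mul (hM x) hx (abs_nonneg _) ((abs_nonneg _).trans (hM x))

lemma phi1_eq (N : ℕ) (z : EuclideanSpace ℝ (Fin 2)) : phi1 N z = π⁻¹ * radialProfile N (‖z‖ ^ 2) :=
  mul_assoc _ _ _

lemma continuous_phi1 (N : ℕ) : Continuous (phi1 N) := by
  unfold phi1 eN
  fun_prop

lemma abs_phi1_le (N : ℕ) (z : EuclideanSpace ℝ (Fin 2)) :
    |phi1 N z| ≤ 2 * exp ((1 - ‖z‖ ^ 2) / 2) := by
  have hs : 0 ≤ ‖z‖ ^ 2 := by positivity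
  rw [phi1_eq, abs_of_nonneg (mul_nonneg (by positivity) (radialProfile_nonneg N hs))]
  calc π⁻¹ * radialProfile N (‖z‖ ^ 2) ≤ 1 * radialProfile N (‖z‖ ^ 2) := by
        gcongr
        · exact radialProfile_nonneg N hs
        · exact inv_le_one_of_one_le₀ (by linarith [pi_gt_three])
    _ ≤ 2 * exp ((1 - ‖z‖ ^ 2) / 2) := by rw [one_mul]; exact radialProfile_le_two_mul_exp hs

lemma tendsto_phi1 {z : EuclideanSpace ℝ (Fin 2)} (hz : ‖z‖ ≠ 1) :
    Tendsto (phi1 · z) atTop (𝓝 ({z | ‖z‖ ≤ 1}.indicator (fun _ => π⁻¹) z)) := by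
  simp_rw [phi1_eq]
  rcases hz.lt_or_gt with hz | hz
  · rw [Set.indicator_of_mem (show z ∈ {z | ‖z‖ ≤ 1} from hz.le)]
    simpa using (tendsto_radialProfile_of_lt_one (sq_nonneg ‖z‖)
      (pow_lt_one₀ (norm_nonneg z) hz two_ne_zero)).const_mul π⁻¹
  · rw [Set.indicator_of_notMem (show z ∉ {z | ‖z‖ ≤ 1} from hz.not_ge)]
    simpa using (tendsto_radialProfile_of_one_lt (one_lt_pow₀ hz two_ne_zero)).const_mul π⁻¹

/-- `P^{1,N}` converges weakly to the uniform distribution on the closed unit disc. -/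
theorem stmt2 (f : EuclideanSpace ℝ (Fin 2) → ℝ) (hf : Continuous f)
    (hb : ∃ M : ℝ, ∀ z, |f z| ≤ M) :
    Tendsto (fun N : ℕ => ∫ z, f z * phi1 N z) atTop
      (nhds ((Real.pi)⁻¹ * ∫ z in {z : EuclideanSpace ℝ (Fin 2) | ‖z‖ ≤ 1}, f z)) := by
  obtain ⟨M, hM⟩ := hb
  have hbound : Integrable fun z : EuclideanSpace ℝ (Fin 2) => 2 * exp ((1 - ‖z‖ ^ 2) / 2) := by
    refine ((integrable_exp_neg_mul_sq_norm (b := 1 / 2) one_half_pos).const_mul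
      (2 * exp (1 / 2))).congr (ae_of_all _ fun z => ?_)
    dsimp only
    rw [mul_assoc, ← exp_add]; ring_nf
  have hsphere : ∀ᵐ z : EuclideanSpace ℝ (Fin 2), ‖z‖ ≠ 1 :=
    measure_mono_null (fun z hz => by simpa using hz) (Measure.addHaar_sphere volume 0 1)
  convert tendsto_integral_mul_of_dominated hf.aestronglyMeasurable hM
    (fun N => (continuous_phi1 N).aestronglyMeasurable) hbound
    (fun N => ae_of_all _ (abs_phi1_le N)) (hsphere.mono fun z => tendsto_phi1) using 2
  have hS : MeasurableSet {z : EuclideanSpace ℝ (Fin 2) | ‖z‖ ≤ 1} :=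
    measurableSet_le continuous_norm.measurable measurable_const
  simp_rw [← Set.indicator_mul_right]
  rw [integral_indicator hS, integral_mul_const, mul_comm]
end

section
/- For every N ≥ 2 and every x = (x₁,…,x_N) ∈ D, one has H(x) ≥ |x|²/(2N) + 1/16, where |x|² := ∑_{i=1}^N |x_i|². In particular H ≥ 0 on D. -/
/-!
Each pair term is bounded below by the tangent-line inequality `log s ≤ s - 1`:
`log (1/t) ≥ 1 - log 2 - t/2`. Summing over ordered pairs, the parallelogram-type identity
`∑_{i,j} ‖xᵢ - xⱼ‖² = 2N ∑ ‖xᵢ‖² - 2 ‖∑ xᵢ‖²` bounds the quadratic losses by `N ∑ ‖xᵢ‖²`,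
which eats half of the confinement term. What remains is `(N - 1)(1 - log 2)/(2N) ≥ 1/16`.
-/

open Finset

/-- The energy `H(x) = (1/N)∑ᵢ ‖xᵢ‖² + (1/(2N²))∑_{i≠j} log(1/‖xᵢ-xⱼ‖²)`. -/
noncomputable def H7 (N : ℕ) (x : Fin N → EuclideanSpace ℝ (Fin 2)) : ℝ :=
  (1 / N) * ∑ i, ‖x i‖ ^ 2
    + (1 / (2 * N ^ 2)) * ∑ i, ∑ j, if i ≠ j then Real.log (1 / ‖x i - x j‖ ^ 2) else 0

theorem Real.one_add_log_sub_mul_le_log_inv {a t : ℝ} (ha : 0 < a) (ht : 0 < t) :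
    1 + Real.log a - a * t ≤ Real.log t⁻¹ := by
  have := Real.log_le_sub_one_of_pos (mul_pos ha ht)
  rw [Real.log_mul ha.ne' ht.ne'] at this
  rw [Real.log_inv]
  linarith

theorem sum_offDiag_const {ι : Type*} [Fintype ι] [DecidableEq ι] (c : ℝ) :
    ∑ i : ι, ∑ j : ι, (if i ≠ j then c else 0 : ℝ) = Fintype.card ι * (Fintype.card ι - 1) * c := by
  have hrow (i : ι) : ∑ j, (if i ≠ j then c else 0 : ℝ) = (Fintype.card ι - 1) * c := by
    rw [← sum_filter, filter_ne, sum_const,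
      card_erase_of_mem (mem_univ i), card_univ, nsmul_eq_mul,
      Nat.cast_pred (Fintype.card_pos_iff.2 ⟨i⟩)]
  simp only [hrow, sum_const, card_univ, nsmul_eq_mul, mul_assoc]

section

variable {ι E : Type*} [Fintype ι] [NormedAddCommGroup E] [InnerProductSpace ℝ E]

theorem sum_sum_norm_sub_sq (x : ι → E) :
    ∑ i, ∑ j, ‖x i - x j‖ ^ 2 = 2 * Fintype.card ι * ∑ i, ‖x i‖ ^ 2 - 2 * ‖∑ i, x i‖ ^ 2 := by
  simp_rw [norm_sub_sq_real, sum_add_distrib, sum_sub_distrib, ← mul_sum,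
    ← inner_sum, ← sum_inner, real_inner_self_eq_norm_sq, sum_const, card_univ,
    nsmul_eq_mul, ← mul_sum]
  ring

theorem sum_sum_norm_sub_sq_le (x : ι → E) :
    ∑ i, ∑ j, ‖x i - x j‖ ^ 2 ≤ 2 * Fintype.card ι * ∑ i, ‖x i‖ ^ 2 := by
  rw [sum_sum_norm_sub_sq]
  nlinarith [sq_nonneg ‖∑ i, x i‖]

theorem sum_offDiag_log_inv_norm_sub_sq_ge [DecidableEq ι] (x : ι → E)
    (hx : Pairwise fun i j => x i ≠ x j) :
    Fintype.card ι * (Fintype.card ι - 1) * (1 - Real.log 2) - Fintype.card ι * ∑ i, ‖x i‖ ^ 2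
      ≤ ∑ i, ∑ j, if i ≠ j then Real.log (1 / ‖x i - x j‖ ^ 2) else 0 := by
  have hpair (i j : ι) : (if i ≠ j then 1 - Real.log 2 else 0) - ‖x i - x j‖ ^ 2 / 2
      ≤ if i ≠ j then Real.log (1 / ‖x i - x j‖ ^ 2) else 0 := by
    by_cases hij : i = j
    · simp [hij]
    · have hpos : 0 < ‖x i - x j‖ ^ 2 := pow_pos (norm_pos_iff.2 (sub_ne_zero.2 (hx hij))) 2
      have := Real.one_add_log_sub_mul_le_log_inv (by norm_num : (0 : ℝ) < 2⁻¹) hpos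
      rw [Real.log_inv] at this
      simp only [ne_eq, hij, not_false_eq_true, if_true, one_div]
      linarith
  have hsum := sum_le_sum fun i (_ : i ∈ univ) =>
    sum_le_sum fun j (_ : j ∈ univ) => hpair i j
  simp only [sum_sub_distrib, ← sum_div, sum_offDiag_const] at hsum
  linarith [sum_sum_norm_sub_sq_le x]

end

/-- Lower bound for the energy: `H(x) ≥ |x|²/(2N) + 1/16` on `D`; in particular `H ≥ 0`. -/
theorem stmt7 (N : ℕ) (hN : 2 ≤ N) (x : Fin N → EuclideanSpace ℝ (Fin 2))
    (hx : ∀ i j, i ≠ j → x i ≠ x j) :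
    (∑ i, ‖x i‖ ^ 2) / (2 * N) + 1 / 16 ≤ H7 N x ∧ 0 ≤ H7 N x := by
  set S := ∑ i, ‖x i‖ ^ 2
  set c := 1 - Real.log 2
  have hN' : (2 : ℝ) ≤ N := by exact_mod_cast hN
  have hc : 1 / 4 ≤ c := by linarith [Real.log_two_lt_d9]
  have hinteraction := sum_offDiag_log_inv_norm_sub_sq_ge x hx
  rw [Fintype.card_fin] at hinteraction
  have hscaled := mul_le_mul_of_nonneg_left hinteraction (by positivity : (0 : ℝ) ≤ 1 / (2 * N ^ 2))
  have hconst : 1 / 16 ≤ (N - 1) * c / (2 * N) := by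
    rw [le_div_iff₀ (by positivity)]
    nlinarith
  have hlower : S / (2 * N) + (N - 1) * c / (2 * N) ≤ H7 N x := by
    have hscaled_eq : 1 / (2 * (N : ℝ) ^ 2) * (N * (N - 1) * c - N * S)
        = (N - 1) * c / (2 * N) - S / (2 * N) := by
      field_simp
    have hconfinement : 1 / (N : ℝ) * S = S / (2 * N) + S / (2 * N) := by
      field_simp; ring
    unfold H7
    linarith
  have hS' : 0 ≤ S / (2 * N) := by positivity
  constructor <;> linarith
end

section
/- For every N ≥ 2 and every R > 0 there exist A > 0 and ε > 0 such that for all x = (x₁,…,x_N) ∈ D, if max_{1≤i≤N} |x_i| ≥ A or min_{1≤i≠j≤N} |x_i − x_j| ≤ ε, then H(x) ≥ R. (In other words, H(x) → +∞ as x approaches the boundary ∂D, i.e., as some particle goes to infinity or two particles collide.) -/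
open Finset

lemma log_inv_sq_ge (a b : EuclideanSpace ℝ (Fin 2)) (hab : a ≠ b) :
    -(‖a‖ ^ 2 / 2 + ‖b‖ ^ 2 / 2 + 4) ≤ Real.log (1 / ‖a - b‖ ^ 2) := by
  have hd : 0 < ‖a - b‖ := by
    rw [norm_pos_iff]; exact sub_ne_zero.mpr hab
  rw [one_div, Real.log_inv, Real.log_pow]
  have h1 : Real.log ‖a - b‖ ≤ ‖a - b‖ - 1 := Real.log_le_sub_one_of_pos hd
  have h2 : ‖a - b‖ ≤ ‖a‖ + ‖b‖ := norm_sub_le a b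
  push_cast
  nlinarith [sq_nonneg (‖a‖ - 2), sq_nonneg (‖b‖ - 2)]

lemma aux_eq (n R L : ℝ) (hn : 0 < n) :
    (1 / (2 * n ^ 2)) * (2 * (n ^ 2 * (R + L / 2)) + L - n ^ 2 * L)
      = R + L / (2 * n ^ 2) := by
  field_simp
  ring

lemma H7_ge (N : ℕ) (hN : 0 < N) (x : Fin N → EuclideanSpace ℝ (Fin 2))
    (hx : ∀ i j, i ≠ j → x i ≠ x j) :
    (∑ i, ‖x i‖ ^ 2) / (2 * N) - 2 ≤ H7 N x := by
  have hN0 : (0 : ℝ) < N := by exact_mod_cast hN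
  set T : ℝ := ∑ i, ‖x i‖ ^ 2 with hT
  set S : ℝ := ∑ i, ∑ j, if i ≠ j then Real.log (1 / ‖x i - x j‖ ^ 2) else 0 with hS
  have hterm : ∀ i j : Fin N, -(‖x i‖ ^ 2 / 2 + ‖x j‖ ^ 2 / 2 + 4)
      ≤ (if i ≠ j then Real.log (1 / ‖x i - x j‖ ^ 2) else 0) := by
    intro i j
    by_cases h : i = j
    · subst h
      simp only [ne_eq, not_true_eq_false, if_false]
      nlinarith [sq_nonneg ‖x i‖]
    · rw [if_pos h]
      exact log_inv_sq_ge _ _ (hx i j h)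
  have e1 : ∑ i : Fin N, ∑ j : Fin N, (-(‖x i‖ ^ 2 / 2 + ‖x j‖ ^ 2 / 2 + 4))
      = -((N : ℝ) * T + 4 * N ^ 2) := by
    rw [hT]
    simp only [neg_add, Finset.sum_add_distrib, Finset.sum_const, Finset.card_univ,
      Fintype.card_fin, nsmul_eq_mul, Finset.sum_neg_distrib, ← Finset.sum_div,
      ← Finset.mul_sum]
    ring
  have hSge : -((N : ℝ) * T + 4 * N ^ 2) ≤ S := by
    rw [← e1]
    exact Finset.sum_le_sum fun i _ => Finset.sum_le_sum fun j _ => hterm i j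
  have hmul : (1 / (2 * (N : ℝ) ^ 2)) * (-((N : ℝ) * T + 4 * N ^ 2))
      ≤ (1 / (2 * (N : ℝ) ^ 2)) * S :=
    mul_le_mul_of_nonneg_left hSge (by positivity)
  have heq : (1 / (2 * (N : ℝ) ^ 2)) * (-((N : ℝ) * T + 4 * N ^ 2))
      = -(T / (2 * N)) - 2 := by
    field_simp
    ring
  have hTN : (1 / (N : ℝ)) * T - T / (2 * N) = T / (2 * N) := by
    field_simp
    ring
  have hH : H7 N x = (1 / N) * T + (1 / (2 * N ^ 2)) * S := rfl
  rw [hH]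
  linarith [hmul, heq, hTN]

set_option maxHeartbeats 1600000 in
/-- Coercivity of the energy: `H(x) → +∞` as `x → ∂D`, quantified as follows. -/
theorem stmt8 (N : ℕ) (hN : 2 ≤ N) (R : ℝ) (hR : 0 < R) :
    ∃ A > (0 : ℝ), ∃ ε > (0 : ℝ), ∀ x : Fin N → EuclideanSpace ℝ (Fin 2),
      (∀ i j, i ≠ j → x i ≠ x j) →
      ((∃ i, A ≤ ‖x i‖) ∨ (∃ i j, i ≠ j ∧ ‖x i - x j‖ ≤ ε)) →
      R ≤ H7 N x := by
  have hN0 : (0 : ℝ) < N := by positivity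
  have hNpos : 0 < N := by omega
  set A : ℝ := max 1 (Real.sqrt (2 * N * (R + 2))) with hAdef
  have hA1 : 1 ≤ A := le_max_left _ _
  have hA0 : (0 : ℝ) < A := lt_of_lt_of_le one_pos hA1
  set L : ℝ := 2 * Real.log (2 * A) with hLdef
  have hlogA : 0 ≤ Real.log (2 * A) := Real.log_nonneg (by linarith)
  have hL0 : 0 ≤ L := by positivity
  set c : ℝ := (N : ℝ) ^ 2 * (R + L / 2) with hcdef
  set ε : ℝ := min 1 (Real.exp (-c)) with hεdef
  have hε0 : 0 < ε := lt_min one_pos (Real.exp_pos _)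
  have hsqrt : Real.sqrt (2 * N * (R + 2)) ≤ A := le_max_right _ _
  have hεe : ε ≤ Real.exp (-c) := min_le_right _ _
  clear_value A L c ε
  refine ⟨A, hA0, ε, hε0, ?_⟩
  intro x hx hcase
  by_cases hfar : ∃ i, A ≤ ‖x i‖
  · -- far case
    obtain ⟨i, hi⟩ := hfar
    have hT : A ^ 2 ≤ ∑ j, ‖x j‖ ^ 2 := by
      have h1 : ‖x i‖ ^ 2 ≤ ∑ j, ‖x j‖ ^ 2 :=
        Finset.single_le_sum (f := fun j => ‖x j‖ ^ 2) (fun j _ => by positivity)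
          (Finset.mem_univ i)
      nlinarith [norm_nonneg (x i)]
    have hA2 : 2 * (N : ℝ) * (R + 2) ≤ A ^ 2 := by
      nlinarith [hsqrt, Real.sq_sqrt (show (0 : ℝ) ≤ 2 * N * (R + 2) by positivity),
        Real.sqrt_nonneg (2 * N * (R + 2))]
    have hmain := H7_ge N hNpos x hx
    have h1 : (2 * (N : ℝ) * (R + 2)) / (2 * N) ≤ (∑ j, ‖x j‖ ^ 2) / (2 * N) := by
      gcongr
      linarith
    have h2 : (2 * (N : ℝ) * (R + 2)) / (2 * N) = R + 2 := by
      field_simp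
    linarith
  · -- collision case
    push_neg at hfar
    rcases hcase with h | ⟨i0, j0, hij, hd⟩
    · obtain ⟨i, hi⟩ := h
      exact absurd hi (not_le.mpr (hfar i))
    set F : Fin N → Fin N → ℝ :=
      fun i j => if i ≠ j then Real.log (1 / ‖x i - x j‖ ^ 2) else 0 with hFdef
    have hH : H7 N x = (1 / N) * (∑ i, ‖x i‖ ^ 2)
        + (1 / (2 * N ^ 2)) * ∑ i, ∑ j, F i j := rfl
    clear_value F
    have hFL : ∀ i j, 0 ≤ F i j + L := by
      intro i j
      by_cases h : i = j
      · subst h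
        simp only [hFdef, ne_eq, not_true_eq_false, if_false, zero_add]
        exact hL0
      · have hd0 : 0 < ‖x i - x j‖ := by
          rw [norm_pos_iff]; exact sub_ne_zero.mpr (hx i j h)
        have hlt : ‖x i - x j‖ ≤ 2 * A := by
          have h1 := norm_sub_le (x i) (x j)
          have h2 := (hfar i).le
          have h3 := (hfar j).le
          linarith
        have hlog := Real.log_le_log hd0 hlt
        simp only [hFdef, if_pos h, one_div, Real.log_inv, Real.log_pow]
        push_cast
        linarith
    have hεlog : Real.log ε ≤ -c := by
      calc Real.log ε ≤ Real.log (Real.exp (-c)) := Real.log_le_log hε0 hεe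
        _ = -c := Real.log_exp _
    have hd0 : 0 < ‖x i0 - x j0‖ := by
      rw [norm_pos_iff]; exact sub_ne_zero.mpr (hx i0 j0 hij)
    have hF0 : 2 * c ≤ F i0 j0 := by
      have hlogd : Real.log ‖x i0 - x j0‖ ≤ Real.log ε := Real.log_le_log hd0 hd
      simp only [hFdef, if_pos hij, one_div, Real.log_inv, Real.log_pow]
      push_cast
      linarith
    have key : F i0 j0 + L - (N : ℝ) ^ 2 * L ≤ ∑ i, ∑ j, F i j := by
      have h1 : F i0 j0 + L ≤ ∑ i, ∑ j, (F i j + L) := by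
        calc F i0 j0 + L ≤ ∑ j, (F i0 j + L) :=
              Finset.single_le_sum (fun j _ => hFL i0 j) (Finset.mem_univ j0)
          _ ≤ ∑ i, ∑ j, (F i j + L) :=
              Finset.single_le_sum
                (fun i _ => Finset.sum_nonneg fun j _ => hFL i j) (Finset.mem_univ i0)
      have h2 : ∑ i : Fin N, ∑ j : Fin N, (F i j + L)
          = (∑ i : Fin N, ∑ j : Fin N, F i j) + (N : ℝ) ^ 2 * L := by
        simp only [Finset.sum_add_distrib, Finset.sum_const, Finset.card_univ,
          Fintype.card_fin, nsmul_eq_mul]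
        ring
      linarith
    have hT0 : (0 : ℝ) ≤ ∑ i, ‖x i‖ ^ 2 :=
      Finset.sum_nonneg fun i _ => by positivity
    have hmulT : (0 : ℝ) ≤ (1 / (N : ℝ)) * ∑ i, ‖x i‖ ^ 2 :=
      mul_nonneg (by positivity) hT0
    have hmul : (1 / (2 * (N : ℝ) ^ 2)) * (F i0 j0 + L - (N : ℝ) ^ 2 * L)
        ≤ (1 / (2 * (N : ℝ) ^ 2)) * ∑ i, ∑ j, F i j :=
      mul_le_mul_of_nonneg_left key (by positivity)
    have heq : R ≤ (1 / (2 * (N : ℝ) ^ 2)) * (2 * c + L - (N : ℝ) ^ 2 * L) := by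
      rw [hcdef, aux_eq _ _ _ hN0]
      have : 0 ≤ L / (2 * (N : ℝ) ^ 2) := by positivity
      linarith
    have hmono : (1 / (2 * (N : ℝ) ^ 2)) * (2 * c + L - (N : ℝ) ^ 2 * L)
        ≤ (1 / (2 * (N : ℝ) ^ 2)) * (F i0 j0 + L - (N : ℝ) ^ 2 * L) :=
      mul_le_mul_of_nonneg_left (by linarith) (by positivity)
    rw [hH]
    linarith
end

section
/- For every N ≥ 2 and every β > 0, the function x ↦ exp(−β H(x)) is Lebesgue integrable on D, i.e., ∫_D e^{−β H(x)} dx < ∞. -/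
open Finset MeasureTheory

lemma aux_int (c a : ℝ) (hc : 0 < c) :
    Integrable (fun y : EuclideanSpace ℝ (Fin 2) => Real.exp (-c * ‖y‖ ^ 2 + a * ‖y‖)) := by
  have hg : Integrable (fun y : EuclideanSpace ℝ (Fin 2) => Real.exp (-(c/2) * ‖y‖ ^ 2)) := by
    have h := (GaussianFourier.integrable_cexp_neg_mul_sq_norm_add
      (V := EuclideanSpace ℝ (Fin 2)) (b := ((c/2 : ℝ) : ℂ))
      (by simpa using half_pos hc) 0 0).norm
    convert h using 2 with y
    simp [Complex.norm_exp, ← Complex.ofReal_pow]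
  refine ((hg.const_mul (Real.exp (a ^ 2 / (2 * c)))).mono' ?_ ?_)
  · apply Measurable.aestronglyMeasurable
    fun_prop
  · filter_upwards with y
    rw [Real.norm_eq_abs, abs_of_pos (Real.exp_pos _), ← Real.exp_add, Real.exp_le_exp]
    have hx : a ^ 2 / (2 * c) * (2 * c) = a ^ 2 := div_mul_cancel₀ _ (by positivity)
    nlinarith [sq_nonneg (c * ‖y‖ - a), hc, hx]

/-- Integrability of the Boltzmann factor: `∫_D e^{-βH} dx < ∞` for every `β > 0`. -/
theorem stmt9 (N : ℕ) (hN : 2 ≤ N) (β : ℝ) (hβ : 0 < β) :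
    IntegrableOn (fun x => Real.exp (-β * H7 N x))
      {x : Fin N → EuclideanSpace ℝ (Fin 2) | ∀ i j, i ≠ j → x i ≠ x j} := by
  have hn : (0:ℝ) < N := by
    have : (0:ℕ) < N := by omega
    exact_mod_cast this
  set c : ℝ := β / N with hc
  set a : ℝ := 2 * β / N with ha
  have hcpos : 0 < c := by positivity
  have key : Integrable (fun x : Fin N → EuclideanSpace ℝ (Fin 2) =>
      ∏ i, Real.exp (-c * ‖x i‖ ^ 2 + a * ‖x i‖)) :=
    Integrable.fintype_prod (fun _ => aux_int c a hcpos)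
  have hs : MeasurableSet {x : Fin N → EuclideanSpace ℝ (Fin 2) | ∀ i j, i ≠ j → x i ≠ x j} := by
    have he : {x : Fin N → EuclideanSpace ℝ (Fin 2) | ∀ i j, i ≠ j → x i ≠ x j}
        = ⋂ i, ⋂ j, {x : Fin N → EuclideanSpace ℝ (Fin 2) | i ≠ j → x i ≠ x j} := by
      ext x; simp [Set.mem_iInter]
    rw [he]
    refine MeasurableSet.iInter fun i => MeasurableSet.iInter fun j => ?_
    by_cases h : i = j
    · simp [h]
    · have h2 : {x : Fin N → EuclideanSpace ℝ (Fin 2) | i ≠ j → x i ≠ x j}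
          = {x : Fin N → EuclideanSpace ℝ (Fin 2) | x i = x j}ᶜ := by
        ext x; simp [h]
      rw [h2]
      exact (measurableSet_eq_fun (measurable_pi_apply i) (measurable_pi_apply j)).compl
  have hH : Measurable (H7 N) := by
    unfold H7
    apply Measurable.add
    · fun_prop
    · apply Measurable.const_mul
      apply Finset.measurable_sum _ (fun i _ => ?_)
      apply Finset.measurable_sum _ (fun j _ => ?_)
      split
      · apply Real.measurable_log.comp
        fun_prop
      · exact measurable_const
  refine Integrable.mono' key.integrableOn ?_ ?_
  · exact (Real.measurable_exp.comp ((hH.const_mul (-β)).comp measurable_id)).aestronglyMeasurable.restrict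
  · rw [ae_restrict_iff' hs]
    filter_upwards with x hx
    rw [Real.norm_eq_abs, abs_of_pos (Real.exp_pos _), ← Real.exp_sum, Real.exp_le_exp]
    -- main pointwise bound
    set T : ℝ := ∑ i, ‖x i‖ with hT
    set Q : ℝ := ∑ i, ‖x i‖ ^ 2 with hQ
    have hS : -(4 * (N:ℝ) * T) ≤ ∑ i, ∑ j,
        (if i ≠ j then Real.log (1 / ‖x i - x j‖ ^ 2) else 0) := by
      have h1 : ∀ i j : Fin N,
          -2 * (‖x i‖ + ‖x j‖) ≤ (if i ≠ j then Real.log (1 / ‖x i - x j‖ ^ 2) else 0) := by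
        intro i j
        by_cases h : i ≠ j
        · rw [if_pos h]
          have hpos : 0 < ‖x i - x j‖ := by
            rw [norm_pos_iff]; exact sub_ne_zero.mpr (hx i j h)
          rw [one_div, Real.log_inv, Real.log_pow]
          have hl := Real.log_le_sub_one_of_pos hpos
          have hle : ‖x i - x j‖ ≤ ‖x i‖ + ‖x j‖ := norm_sub_le _ _
          push_cast
          nlinarith
        · rw [if_neg h]
          have := norm_nonneg (x i); have := norm_nonneg (x j); linarith
      have e1 : ∑ i, ∑ j : Fin N, (-2 * (‖x i‖ + ‖x j‖)) = -(4 * (N:ℝ) * T) := by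
        simp only [mul_add, Finset.sum_add_distrib, Finset.sum_const,
          Finset.card_univ, Fintype.card_fin, nsmul_eq_mul, ← Finset.sum_mul,
          ← Finset.mul_sum, ← hT]
        ring
      rw [← e1]
      exact Finset.sum_le_sum fun i _ => Finset.sum_le_sum fun j _ => h1 i j
    have hrhs : ∑ i, (-c * ‖x i‖ ^ 2 + a * ‖x i‖) = -c * Q + a * T := by
      rw [Finset.sum_add_distrib, ← Finset.mul_sum, ← Finset.mul_sum]
    rw [hrhs]
    unfold H7
    rw [← hQ]
    set S : ℝ := ∑ i, ∑ j, (if i ≠ j then Real.log (1 / ‖x i - x j‖ ^ 2) else 0) with hSdef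
    have hSge : 0 ≤ S + 4 * (N:ℝ) * T := by linarith
    have hkey : (-c * Q + a * T) - (-β * ((1 / N) * Q + (1 / (2 * (N:ℝ) ^ 2)) * S))
        = β / (2 * (N:ℝ) ^ 2) * (S + 4 * N * T) := by
      rw [hc, ha]; field_simp; ring
    have hfac : 0 ≤ β / (2 * (N:ℝ) ^ 2) * (S + 4 * N * T) :=
      mul_nonneg (by positivity) hSge
    linarith [hkey, hfac]
end

section
/- For every N ≥ 2 and all pairwise distinct points x₁,…,x_N ∈ ℝ², one has ∑_{i=1}^N | ∑_{j≠i} (x_i − x_j)/|x_i − x_j|² |² ≥ ∑_{i=1}^N ∑_{j≠i} 1/|x_i − x_j|², where |·| is the Euclidean norm on ℝ² and · denotes the sums over indices in {1,…,N}. -/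
open Finset
open scoped RealInnerProductSpace

section aux
variable {V : Type*} [NormedAddCommGroup V] [InnerProductSpace ℝ V]

lemma key10 (a b c : V) (hab : a ≠ b) (hac : a ≠ c) (hbc : b ≠ c) :
    0 ≤ ⟪(‖a - b‖ ^ 2)⁻¹ • (a - b), (‖a - c‖ ^ 2)⁻¹ • (a - c)⟫
      + ⟪(‖b - a‖ ^ 2)⁻¹ • (b - a), (‖b - c‖ ^ 2)⁻¹ • (b - c)⟫
      + ⟪(‖c - a‖ ^ 2)⁻¹ • (c - a), (‖c - b‖ ^ 2)⁻¹ • (c - b)⟫ := by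
  have hu : a - b ≠ 0 := sub_ne_zero.2 hab
  have hv : b - c ≠ 0 := sub_ne_zero.2 hbc
  have hw : a - c ≠ 0 := sub_ne_zero.2 hac
  set u := a - b with hud
  set v := b - c with hvd
  have hac' : a - c = u + v := by rw [hud, hvd]; abel
  have hba : b - a = -u := by rw [hud]; abel
  have hca : c - a = -(u + v) := by rw [hud, hvd]; abel
  have hcb : c - b = -v := by rw [hvd]; abel
  rw [hac', hba, hca, hcb]
  simp only [real_inner_smul_left, real_inner_smul_right, norm_neg, inner_neg_neg,
    inner_neg_left, inner_neg_right]
  have hA : (0:ℝ) < ‖u‖ ^ 2 := pow_pos (norm_pos_iff.2 hu) 2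
  have hB : (0:ℝ) < ‖v‖ ^ 2 := pow_pos (norm_pos_iff.2 hv) 2
  have hC : (0:ℝ) < ‖u + v‖ ^ 2 := by
    have huv : u + v ≠ 0 := by rw [← hac']; exact hw
    exact pow_pos (norm_pos_iff.2 huv) 2
  have hCeq : ‖u + v‖ ^ 2 = ‖u‖ ^ 2 + 2 * ⟪u, v⟫ + ‖v‖ ^ 2 := norm_add_sq_real u v
  have h1 : ⟪u, u + v⟫ = ‖u‖ ^ 2 + ⟪u, v⟫ := by
    rw [inner_add_right, real_inner_self_eq_norm_sq]
  have h2 : ⟪u + v, v⟫ = ⟪u, v⟫ + ‖v‖ ^ 2 := by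
    rw [inner_add_left, real_inner_self_eq_norm_sq]
  have hcs : ⟪u, v⟫ * ⟪u, v⟫ ≤ (‖u‖^2) * (‖v‖^2) := by
    have := real_inner_mul_inner_self_le u v
    rwa [real_inner_self_eq_norm_sq, real_inner_self_eq_norm_sq] at this
  rw [h1, h2]
  set A := ‖u‖ ^ 2
  set B := ‖v‖ ^ 2
  set t := ⟪u, v⟫
  rw [hCeq]
  rw [hCeq] at hC
  have key : (A + 2 * t + B)⁻¹ * (A⁻¹ * (A + t)) + B⁻¹ * (A⁻¹ * -t)
      + B⁻¹ * -((A + 2 * t + B)⁻¹ * -(t + B)) = 2 * (A*B - t*t) / (A*B*(A+2*t+B)) := by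
    field_simp
    ring
  rw [key]
  apply div_nonneg
  · nlinarith
  · positivity

end aux

/-- For pairwise distinct points in the plane,
`∑ᵢ |∑_{j≠i} (xᵢ-xⱼ)/|xᵢ-xⱼ|²|² ≥ ∑ᵢ ∑_{j≠i} 1/|xᵢ-xⱼ|²`. -/
theorem stmt10 (N : ℕ) (hN : 2 ≤ N) (x : Fin N → EuclideanSpace ℝ (Fin 2))
    (hx : ∀ i j, i ≠ j → x i ≠ x j) :
    ∑ i, ∑ j ∈ Finset.univ.erase i, (‖x i - x j‖ ^ 2)⁻¹
      ≤ ∑ i, ‖∑ j ∈ Finset.univ.erase i, (‖x i - x j‖ ^ 2)⁻¹ • (x i - x j)‖ ^ 2 := by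
  set f : Fin N → Fin N → EuclideanSpace ℝ (Fin 2) := fun i j => (‖x i - x j‖ ^ 2)⁻¹ • (x i - x j) with hf
  -- the "triple" term with indicator
  set d : Fin N → Fin N → Fin N → ℝ :=
    fun i j k => if i ≠ j ∧ i ≠ k ∧ j ≠ k then ⟪f i j, f i k⟫ else 0 with hd
  -- norm of each f i j
  have hfn : ∀ i j, i ≠ j → ⟪f i j, f i j⟫ = (‖x i - x j‖ ^ 2)⁻¹ := by
    intro i j hij
    have hne : x i - x j ≠ 0 := sub_ne_zero.2 (hx i j hij)
    have hpos : (0:ℝ) < ‖x i - x j‖ ^ 2 := pow_pos (norm_pos_iff.2 hne) 2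
    rw [hf]
    simp only
    rw [real_inner_smul_left, real_inner_smul_right, real_inner_self_eq_norm_sq]
    field_simp
  -- expansion of each squared norm
  have hexp : ∀ i, ‖∑ j ∈ Finset.univ.erase i, f i j‖ ^ 2
      = (∑ j ∈ Finset.univ.erase i, (‖x i - x j‖ ^ 2)⁻¹) + ∑ j, ∑ k, d i j k := by
    intro i
    rw [← real_inner_self_eq_norm_sq, sum_inner]
    have step1 : ∀ j ∈ Finset.univ.erase i, ⟪f i j, ∑ k ∈ Finset.univ.erase i, f i k⟫
        = (‖x i - x j‖ ^ 2)⁻¹ + ∑ k, d i j k := by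
      intro j hj
      have hji : j ≠ i := Finset.ne_of_mem_erase hj
      rw [inner_sum, ← Finset.add_sum_erase _ _ hj, hfn i j hji.symm]
      congr 1
      rw [show (Finset.univ.erase i).erase j = Finset.univ.filter (fun k => ¬(k = j ∨ k = i)) by
        ext k; simp [Finset.mem_erase, and_comm, not_or, and_assoc]]
      rw [Finset.sum_filter]
      apply Finset.sum_congr rfl
      intro k _
      rw [hd]
      simp only
      split_ifs with h1 h2 h2 <;>
        first
        | rfl
        | (exfalso; simp only [not_or, not_and_or, not_not, ne_eq] at h1 h2 ⊢; tauto)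
    rw [Finset.sum_congr rfl step1, Finset.sum_add_distrib]
    congr 1
    apply Finset.sum_erase
    rw [hd]
    simp
  -- nonnegativity of the triple term
  have hT : 0 ≤ ∑ i, ∑ j, ∑ k, d i j k := by
    set D : Fin N × Fin N × Fin N → ℝ := fun p => d p.1 p.2.1 p.2.2 with hD
    have htot : ∑ i, ∑ j, ∑ k, d i j k = ∑ p : Fin N × Fin N × Fin N, D p := by
      rw [Fintype.sum_prod_type]
      apply Finset.sum_congr rfl
      intro i _
      rw [Fintype.sum_prod_type]
    let σ1 : (Fin N × Fin N × Fin N) ≃ (Fin N × Fin N × Fin N) :=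
      ⟨fun p => (p.2.1, p.1, p.2.2), fun p => (p.2.1, p.1, p.2.2),
        fun p => rfl, fun p => rfl⟩
    let σ2 : (Fin N × Fin N × Fin N) ≃ (Fin N × Fin N × Fin N) :=
      ⟨fun p => (p.2.2, p.1, p.2.1), fun p => (p.2.1, p.2.2, p.1),
        fun p => rfl, fun p => rfl⟩
    have h1 : ∑ p : Fin N × Fin N × Fin N, D (σ1 p) = ∑ p : Fin N × Fin N × Fin N, D p :=
      Equiv.sum_comp σ1 D
    have h2 : ∑ p : Fin N × Fin N × Fin N, D (σ2 p) = ∑ p : Fin N × Fin N × Fin N, D p :=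
      Equiv.sum_comp σ2 D
    have h3 : 0 ≤ ∑ p : Fin N × Fin N × Fin N, (D p + D (σ1 p) + D (σ2 p)) := by
      apply Finset.sum_nonneg
      rintro ⟨i, j, k⟩ _
      show 0 ≤ d i j k + d j i k + d k i j
      by_cases h : i ≠ j ∧ i ≠ k ∧ j ≠ k
      · rw [hd]
        simp only
        rw [if_pos h, if_pos ⟨Ne.symm h.1, h.2.2, h.2.1⟩,
          if_pos ⟨Ne.symm h.2.1, Ne.symm h.2.2, h.1⟩]
        rw [hf]
        exact key10 (x i) (x j) (x k) (hx i j h.1) (hx i k h.2.1) (hx j k h.2.2)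
      · rw [hd]
        simp only
        rw [if_neg h]
        rw [if_neg (fun hc => h ⟨Ne.symm hc.1, hc.2.2, hc.2.1⟩)]
        rw [if_neg (fun hc => h ⟨hc.2.2, Ne.symm hc.1, Ne.symm hc.2.1⟩)]
        norm_num
    rw [Finset.sum_add_distrib, Finset.sum_add_distrib, h1, h2] at h3
    rw [htot]
    linarith
  calc ∑ i, ∑ j ∈ Finset.univ.erase i, (‖x i - x j‖ ^ 2)⁻¹
      ≤ (∑ i, ∑ j ∈ Finset.univ.erase i, (‖x i - x j‖ ^ 2)⁻¹) + ∑ i, ∑ j, ∑ k, d i j k := by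
        linarith
    _ = ∑ i, ((∑ j ∈ Finset.univ.erase i, (‖x i - x j‖ ^ 2)⁻¹) + ∑ j, ∑ k, d i j k) := by
        rw [Finset.sum_add_distrib]
    _ = ∑ i, ‖∑ j ∈ Finset.univ.erase i, (‖x i - x j‖ ^ 2)⁻¹ • (x i - x j)‖ ^ 2 := by
        apply Finset.sum_congr rfl
        intro i _
        rw [← hexp i]
end

section
/- For every N ≥ 1, the function g : ℝ² → ℝ defined by g(z) = N|z|² − log e_N(N|z|²) is convex on ℝ². Equivalently, the function t ↦ t − log e_N(t) is nondecreasing and convex on [0,∞), and the probability measure on ℝ² with density φ^{1,N}(z) = π^{−1} e^{−N|z|²} e_N(N|z|²) is log-concave. -/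
/-!
The derivative of `e_{M+1}` is `e_M`, so `f(t) = t - log e_{M+1}(t)` has
`f' = 1 - e_M / e_{M+1} ≥ 0` and `f'' = (e_M² - e_{M-1} e_{M+1}) / e_{M+1}²`. The numerator is
nonnegative on `[0, ∞)` by the Newton-type inequality `e_{M-1} e_{M+1} ≤ e_M²`, which in turn
reduces to the termwise comparison `t e_M ≤ M e_{M+1}`. Since `z ↦ N|z|²` is convex and
nonnegative and `f` is convex and nondecreasing on `[0, ∞)`, their composition is convex, and
`log φ^{1,N}` is `-log π` minus this composition.
-/

open MeasureTheory Real

open Set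

lemma eN_zero : eN 0 = 0 := by
  funext t
  simp [eN]

lemma eN_succ (M : ℕ) (t : ℝ) : eN (M + 1) t = eN M t + t ^ M / M.factorial :=
  Finset.sum_range_succ _ _

lemma eN_pos {N : ℕ} (hN : 0 < N) {t : ℝ} (ht : 0 ≤ t) : 0 < eN N t :=
  Finset.sum_pos' (fun _ _ => by positivity) ⟨0, Finset.mem_range.2 hN, by simp⟩

lemma eN_le_eN_succ (M : ℕ) {t : ℝ} (ht : 0 ≤ t) : eN M t ≤ eN (M + 1) t := by
  rw [eN_succ]
  have : 0 ≤ t ^ M / M.factorial := by positivity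
  linarith

lemma mul_pow_div_factorial (t : ℝ) (ℓ : ℕ) :
    t * (t ^ ℓ / ℓ.factorial) = (ℓ + 1) * (t ^ (ℓ + 1) / (ℓ + 1).factorial) := by
  rw [Nat.factorial_succ]
  push_cast
  field_simp
  ring

lemma hasDerivAt_eN_succ (M : ℕ) (t : ℝ) : HasDerivAt (eN (M + 1)) (eN M t) t := by
  induction M with
  | zero =>
    rw [show eN 1 = fun _ => 1 by funext; simp [eN]]
    simpa [eN_zero] using hasDerivAt_const t (1 : ℝ)
  | succ M ih =>
    have hterm : HasDerivAt (fun t : ℝ => t ^ (M + 1) / (M + 1).factorial)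
        (t ^ M / M.factorial) t := by
      refine ((hasDerivAt_pow (M + 1) t).div_const _).congr_deriv ?_
      rw [Nat.factorial_succ]
      push_cast
      field_simp
    rw [show eN (M + 1 + 1) = fun t => eN (M + 1) t + t ^ (M + 1) / (M + 1).factorial from
      funext (eN_succ (M + 1)), eN_succ]
    exact ih.add hterm

lemma hasDerivAt_eN (M : ℕ) (t : ℝ) : HasDerivAt (eN M) (eN (M - 1) t) t := by
  cases M with
  | zero => simp [eN_zero]
  | succ M => exact hasDerivAt_eN_succ M t

lemma mul_eN_le (M : ℕ) {t : ℝ} (ht : 0 ≤ t) : t * eN M t ≤ M * eN (M + 1) t := by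
  have hshift : eN (M + 1) t = 1 + ∑ ℓ ∈ Finset.range M, t ^ (ℓ + 1) / (ℓ + 1).factorial := by
    rw [eN, Finset.sum_range_succ', add_comm]
    simp
  have htermwise : ∀ ℓ ∈ Finset.range M,
      t * (t ^ ℓ / ℓ.factorial) ≤ M * (t ^ (ℓ + 1) / (ℓ + 1).factorial) := by
    intro ℓ hℓ
    rw [mul_pow_div_factorial]
    have : (ℓ : ℝ) + 1 ≤ M := by exact_mod_cast Finset.mem_range.1 hℓ
    gcongr
  calc t * eN M t
      ≤ ∑ ℓ ∈ Finset.range M, M * (t ^ (ℓ + 1) / (ℓ + 1).factorial) := by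
        rw [eN, Finset.mul_sum]
        exact Finset.sum_le_sum htermwise
    _ ≤ M * eN (M + 1) t := by
        rw [← Finset.mul_sum, hshift]
        nlinarith [M.cast_nonneg (α := ℝ)]

lemma eN_pred_mul_eN_succ_le_sq (M : ℕ) {t : ℝ} (ht : 0 ≤ t) :
    eN (M - 1) t * eN (M + 1) t ≤ eN M t ^ 2 := by
  cases M with
  | zero => simp [eN_zero]
  | succ m =>
    have hprev : eN m t = eN (m + 1) t - t ^ m / m.factorial := by rw [eN_succ]; ring
    have hkey := mul_eN_le (m + 1) ht
    have hterm := mul_pow_div_factorial t m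
    rw [Nat.add_sub_cancel, hprev, eN_succ (m + 1)]
    rw [eN_succ (m + 1)] at hkey
    push_cast at hkey hterm
    set E := eN (m + 1) t
    set b := t ^ m / m.factorial
    set a := t ^ (m + 1) / (m + 1).factorial
    have hb : 0 ≤ b := by positivity
    -- `t b = (m+1) a` turns `b · t e_{m+1} ≤ b · (m+1) e_{m+2}` into the claim times `m+1`
    have hscaled : ((m : ℝ) + 1) * (a * E - b * E - a * b) ≤ 0 := by
      linear_combination (mul_le_mul_of_nonneg_left hkey hb) - E * hterm
    linarith [nonpos_of_mul_nonpos_right hscaled (by positivity : (0 : ℝ) < m + 1)]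

lemma hasDerivAt_sub_log_eN_succ (M : ℕ) {t : ℝ} (ht : 0 ≤ t) :
    HasDerivAt (fun t => t - log (eN (M + 1) t)) (1 - eN M t / eN (M + 1) t) t :=
  (hasDerivAt_id t).sub ((hasDerivAt_eN_succ M t).log (eN_pos M.succ_pos ht).ne')

lemma hasDerivAt_one_sub_eN_div_eN_succ (M : ℕ) {t : ℝ} (ht : 0 ≤ t) :
    HasDerivAt (fun t => 1 - eN M t / eN (M + 1) t)
      ((eN M t ^ 2 - eN (M - 1) t * eN (M + 1) t) / eN (M + 1) t ^ 2) t :=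
  ((hasDerivAt_const t 1).fun_sub ((hasDerivAt_eN M t).div (hasDerivAt_eN_succ M t)
    (eN_pos M.succ_pos ht).ne')).congr_deriv (by ring)

lemma monotoneOn_sub_log_eN_succ (M : ℕ) :
    MonotoneOn (fun t => t - log (eN (M + 1) t)) (Ici 0) := by
  refine monotoneOn_of_hasDerivWithinAt_nonneg (convex_Ici 0)
    (fun t ht => (hasDerivAt_sub_log_eN_succ M ht).continuousAt.continuousWithinAt)
    (fun t ht => (hasDerivAt_sub_log_eN_succ M (interior_subset ht)).hasDerivWithinAt)
    (fun t ht => ?_)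
  have ht : 0 ≤ t := interior_subset ht
  rw [sub_nonneg, div_le_one (eN_pos M.succ_pos ht)]
  exact eN_le_eN_succ M ht

lemma convexOn_sub_log_eN_succ (M : ℕ) :
    ConvexOn ℝ (Ici 0) (fun t => t - log (eN (M + 1) t)) := by
  refine convexOn_of_hasDerivWithinAt2_nonneg (convex_Ici 0)
    (fun t ht => (hasDerivAt_sub_log_eN_succ M ht).continuousAt.continuousWithinAt)
    (fun t ht => (hasDerivAt_sub_log_eN_succ M (interior_subset ht)).hasDerivWithinAt)
    (fun t ht => (hasDerivAt_one_sub_eN_div_eN_succ M (interior_subset ht)).hasDerivWithinAt)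
    (fun t ht => ?_)
  have := eN_pred_mul_eN_succ_le_sq M (interior_subset ht : (0 : ℝ) ≤ t)
  exact div_nonneg (by linarith) (sq_nonneg _)

lemma ConvexOn.comp_of_mapsTo {E : Type*} [AddCommGroup E] [Module ℝ E] {s : Set E}
    {t : Set ℝ} {f : E → ℝ} {g : ℝ → ℝ} (hg : ConvexOn ℝ t g) (hg' : MonotoneOn g t)
    (hf : ConvexOn ℝ s f) (hst : MapsTo f s t) : ConvexOn ℝ s (g ∘ f) :=
  ⟨hf.1, fun _ hx _ hy _ _ ha hb hab =>
    (hg' (hst (hf.1 hx hy ha hb hab)) (hg.1 (hst hx) (hst hy) ha hb hab)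
      (hf.2 hx hy ha hb hab)).trans (hg.2 (hst hx) (hst hy) ha hb hab)⟩

lemma convexOn_comp_mul_norm_sq {E : Type*} [SeminormedAddCommGroup E] [NormedSpace ℝ E]
    {g : ℝ → ℝ} (hg : ConvexOn ℝ (Ici 0) g) (hg' : MonotoneOn g (Ici 0)) {c : ℝ} (hc : 0 ≤ c) :
    ConvexOn ℝ univ (fun z : E => g (c * ‖z‖ ^ 2)) := by
  have hq : ConvexOn ℝ univ (fun z : E => c * ‖z‖ ^ 2) :=
    (convexOn_univ_norm.pow (fun _ _ => norm_nonneg _) 2).smul hc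
  exact hg.comp_of_mapsTo hg' hq fun z _ => show (0 : ℝ) ≤ c * ‖z‖ ^ 2 by positivity

lemma log_phi1 {N : ℕ} (hN : 0 < N) (z : EuclideanSpace ℝ (Fin 2)) :
    log (phi1 N z) = -log π - ((N : ℝ) * ‖z‖ ^ 2 - log (eN N ((N : ℝ) * ‖z‖ ^ 2))) := by
  have hpos := eN_pos hN (by positivity : (0 : ℝ) ≤ N * ‖z‖ ^ 2)
  rw [phi1, log_mul (by positivity) hpos.ne', log_mul (by positivity) (exp_ne_zero _),
    log_exp, log_inv]
  ring

/-- The potential `g(z) = N|z|² - log e_N(N|z|²)` is convex on `ℝ²`; equivalently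
`t ↦ t - log e_N(t)` is nondecreasing and convex on `[0,∞)`, and the measure with
density `φ^{1,N}` is log-concave. -/
theorem stmt15 (N : ℕ) (hN : 1 ≤ N) :
    ConvexOn ℝ Set.univ
      (fun z : EuclideanSpace ℝ (Fin 2) =>
        (N : ℝ) * ‖z‖ ^ 2 - Real.log (eN N ((N : ℝ) * ‖z‖ ^ 2)))
    ∧ MonotoneOn (fun t : ℝ => t - Real.log (eN N t)) (Set.Ici 0)
    ∧ ConvexOn ℝ (Set.Ici 0) (fun t : ℝ => t - Real.log (eN N t))
    ∧ ConcaveOn ℝ Set.univ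
        (fun z : EuclideanSpace ℝ (Fin 2) => Real.log (phi1 N z)) := by
  obtain ⟨M, rfl⟩ : ∃ M, N = M + 1 := ⟨N - 1, by omega⟩
  have hmono := monotoneOn_sub_log_eN_succ M
  have hconv := convexOn_sub_log_eN_succ M
  have hg := convexOn_comp_mul_norm_sq (E := EuclideanSpace ℝ (Fin 2)) hconv hmono
    (Nat.cast_nonneg (M + 1))
  refine ⟨hg, hmono, hconv, ?_⟩
  simp_rw [log_phi1 hN]
  exact (concaveOn_const _ convex_univ).sub hg
end

section
/- For every N ≥ 1 and every z ∈ ℂ, one has |e_N(Nz) − e^{Nz} 𝟙_{|z|≤1}| ≤ r_N(z), where r_N(z) := (e^N/√(2πN)) |z|^N [ (N+1)/(N(1−|z|)+1) · 𝟙_{|z|≤1} + N/(N(|z|−1)+1) · 𝟙_{|z|>1} ]. -/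
/-!
Write `r = N‖z‖`. Inside the unit disc the error is the tail `∑_{ℓ ≥ N} r^ℓ/ℓ!` of the
exponential series, whose consecutive terms shrink at least by the factor `r/(N+1) < 1`;
outside it is the head `∑_{ℓ < N} r^ℓ/ℓ!`, whose terms, read backwards from `ℓ = N - 1`,
shrink at least by `(N-1)/r < 1`. Both geometric bounds are multiples of `r^N/N!`, and
Stirling's lower bound for `N!` turns `N^N/N!` into `e^N/√(2πN)`.
-/

/-- Truncated exponential series, complex argument. -/
noncomputable def eC (N : ℕ) (w : ℂ) : ℂ := ∑ ℓ ∈ Finset.range N, w ^ ℓ / (Nat.factorial ℓ)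

open Finset Nat Real

theorem pow_div_factorial_le_exp_div_sqrt {n : ℕ} (hn : n ≠ 0) :
    (n : ℝ) ^ n / n ! ≤ exp n / √(2 * π * n) := by
  have hpos : 0 < √(2 * π * n) * (n / exp 1) ^ n := by positivity
  calc (n : ℝ) ^ n / n ! ≤ (n : ℝ) ^ n / (√(2 * π * n) * (n / exp 1) ^ n) :=
        div_le_div_of_nonneg_left (by positivity) hpos (Stirling.le_factorial_stirling n)
    _ = exp n / √(2 * π * n) := by
        rw [div_pow, ← exp_one_pow]
        field_simp

theorem Real.exp_sub_sum_range_le {n : ℕ} {r : ℝ} (hr₀ : 0 ≤ r) (hr : r < n + 1) :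
    exp r - ∑ m ∈ range n, r ^ m / m ! ≤ r ^ n / n ! * ((n + 1) / (n + 1 - r)) := by
  set q := r / (n + 1)
  have hq₀ : 0 ≤ q := by positivity
  have hq₁ : q < 1 := (div_lt_one (by positivity)).mpr hr
  have htail : HasSum (fun j ↦ r ^ (j + n) / (j + n) !) (exp r - ∑ m ∈ range n, r ^ m / m !) :=
    (hasSum_nat_add_iff' n).mpr (by simpa [exp_eq_exp_ℝ] using
      NormedSpace.expSeries_div_hasSum_exp r)
  have hgeom : HasSum (fun j ↦ r ^ n / n ! * q ^ j) (r ^ n / n ! * (1 - q)⁻¹) :=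
    (hasSum_geometric_of_lt_one hq₀ hq₁).mul_left _
  have hterm (j : ℕ) : r ^ (j + n) / (j + n) ! ≤ r ^ n / n ! * q ^ j := by
    have hfac : (n ! * (n + 1) ^ j : ℝ) ≤ (j + n) ! := by
      rw [add_comm j n]; exact_mod_cast factorial_mul_pow_le_factorial
    calc r ^ (j + n) / (j + n) ! ≤ r ^ (j + n) / (n ! * (n + 1) ^ j) :=
          div_le_div_of_nonneg_left (by positivity) (by positivity) hfac
      _ = r ^ n / n ! * q ^ j := by rw [div_pow, pow_add]; field_simp
  calc exp r - ∑ m ∈ range n, r ^ m / m ! ≤ r ^ n / n ! * (1 - q)⁻¹ :=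
        hasSum_le hterm htail hgeom
    _ = r ^ n / n ! * ((n + 1) / (n + 1 - r)) := by
        congr 1
        rw [← inv_div, sub_div, div_self (by positivity)]

theorem Real.sum_range_pow_div_factorial_le (n : ℕ) {r : ℝ} (hr : (n : ℝ) - 1 < r) :
    ∑ m ∈ range n, r ^ m / m ! ≤ r ^ n / n ! * (n / (r - n + 1)) := by
  induction n generalizing r with
  | zero => simp
  | succ n ih =>
    push_cast at hr ⊢
    have hr₀ : 0 < r := by linarith [(n.cast_nonneg : (0 : ℝ) ≤ n)]
    have hrn : 0 < r - n := by linarith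
    have hprev := ih (by linarith)
    have hratio : (r + 1) / (r - n + 1) ≤ r / (r - n) := by
      rw [div_le_div_iff₀ (by linarith) hrn]; nlinarith
    calc ∑ m ∈ range (n + 1), r ^ m / m ! ≤ r ^ n / n ! * ((r + 1) / (r - n + 1)) := by
          rw [sum_range_succ]
          convert add_le_add_left hprev (r ^ n / n !) using 1
          field_simp; ring
      _ ≤ r ^ n / n ! * (r / (r - n)) := by gcongr
      _ = r ^ (n + 1) / (n + 1)! * ((n + 1) / (r - (n + 1) + 1)) := by
          rw [show r - (n + 1) + 1 = r - n by ring, factorial_succ, pow_succ]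
          push_cast
          field_simp

theorem Complex.norm_exp_sub_sum_range_le {n : ℕ} {w : ℂ} (hw : ‖w‖ < n + 1) :
    ‖exp w - ∑ m ∈ range n, w ^ m / (m ! : ℂ)‖ ≤ ‖w‖ ^ n / n ! * ((n + 1) / (n + 1 - ‖w‖)) :=
  (norm_exp_sub_sum_le_exp_norm_sub_sum w n).trans (Real.exp_sub_sum_range_le (norm_nonneg w) hw)

theorem Complex.norm_sum_range_pow_div_factorial_le (n : ℕ) {w : ℂ} (hw : (n : ℝ) - 1 < ‖w‖) :
    ‖∑ m ∈ range n, w ^ m / (m ! : ℂ)‖ ≤ ‖w‖ ^ n / n ! * (n / (‖w‖ - n + 1)) := by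
  refine (norm_sum_le _ _).trans ?_
  simpa only [norm_div, norm_pow, norm_natCast] using Real.sum_range_pow_div_factorial_le n hw

/-- Quantitative approximation of the truncated exponential series:
`|e_N(Nz) - e^{Nz}𝟙_{|z|≤1}| ≤ r_N(z)` where
`r_N(z) = (e^N/√(2πN)) |z|^N [ (N+1)/(N(1-|z|)+1)·𝟙_{|z|≤1} + N/(N(|z|-1)+1)·𝟙_{|z|>1} ]`. -/
theorem stmt18 (N : ℕ) (hN : 1 ≤ N) (z : ℂ) :
    ‖eC N ((N : ℂ) * z)
        - (if ‖z‖ ≤ 1 then Complex.exp ((N : ℂ) * z) else 0)‖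
      ≤ Real.exp N / Real.sqrt (2 * Real.pi * N) * ‖z‖ ^ N *
          (if ‖z‖ ≤ 1 then ((N : ℝ) + 1) / ((N : ℝ) * (1 - ‖z‖) + 1)
           else (N : ℝ) / ((N : ℝ) * (‖z‖ - 1) + 1)) := by
  have hnorm : ‖(N : ℂ) * z‖ = N * ‖z‖ := by simp
  have hstirling : ‖(N : ℂ) * z‖ ^ N / N ! ≤ exp N / √(2 * π * N) * ‖z‖ ^ N := by
    rw [hnorm, mul_pow, mul_div_right_comm]
    gcongr ?_ * _
    exact pow_div_factorial_le_exp_div_sqrt (one_le_iff_ne_zero.mp hN)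
  split_ifs with hz
  · have hden : 0 < (N : ℝ) * (1 - ‖z‖) + 1 := by nlinarith
    calc _ ≤ ‖(N : ℂ) * z‖ ^ N / N ! * ((N + 1) / (N + 1 - ‖(N : ℂ) * z‖)) := by
          rw [norm_sub_rev]
          exact Complex.norm_exp_sub_sum_range_le (by rw [hnorm]; nlinarith)
      _ = ‖(N : ℂ) * z‖ ^ N / N ! * ((N + 1) / (N * (1 - ‖z‖) + 1)) := by rw [hnorm]; ring_nf
      _ ≤ _ := by gcongr
  · have hden : 0 < (N : ℝ) * (‖z‖ - 1) + 1 := by nlinarith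
    calc _ ≤ ‖(N : ℂ) * z‖ ^ N / N ! * (N / (‖(N : ℂ) * z‖ - N + 1)) := by
          rw [sub_zero]
          exact Complex.norm_sum_range_pow_div_factorial_le N (by rw [hnorm]; nlinarith)
      _ = ‖(N : ℂ) * z‖ ^ N / N ! * (N / (N * (‖z‖ - 1) + 1)) := by rw [hnorm]; ring_nf
      _ ≤ _ := by gcongr
end
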